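/- arXiv:2502.15103 — 2 statements merged into one kernel-verified Lean document; each statement's English description precedes it below -/
import Mathlib

section
/- For φ ∈ [0, π/2], both sin φ and φ/π are rational if and only if φ ∈ {0, π/6, π/2}. -/
open Real

namespace Niven

lemma isIntegral_of_pow_eq_one {z : ℂ} {n : ℕ} (hn : n ≠ 0) (h : z ^ n = 1) :
    IsIntegral ℤ z := by
  refine ⟨Polynomial.X ^ n - Polynomial.C 1, Polynomial.monic_X_pow_sub_C 1 hn, ?_⟩
  simp [h]

lemma isIntegral_I : IsIntegral ℤ Complex.I := by
  refine ⟨Polynomial.X ^ 2 + Polynomial.C 1, ?_, ?_⟩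
  · have := Polynomial.monic_X_pow_add_C (R := ℤ) (1 : ℤ) (two_ne_zero)
    simpa using this
  · simp [Complex.I_sq]

theorem niven (φ : ℝ) (hφ : φ ∈ Set.Icc 0 (π / 2)) :
    ((∃ q : ℚ, Real.sin φ = q) ∧ (∃ q : ℚ, φ / π = q)) ↔
      (φ = 0 ∨ φ = π / 6 ∨ φ = π / 2) := by
  obtain ⟨hφ0, hφ2⟩ := hφ
  constructor
  · rintro ⟨⟨r, hr⟩, ⟨q, hq⟩⟩
    -- φ = q * π
    have hφπ : φ = (q : ℝ) * π := by
      field_simp at hq; linarith [hq]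
    set z : ℂ := Complex.exp (φ * Complex.I) with hz
    set w : ℂ := Complex.exp (-(φ * Complex.I)) with hw
    have hb : (q.den : ℝ) ≠ 0 := by exact_mod_cast q.den_nz
    -- z ^ (2 * q.den) = 1
    have key : ((2 * q.den : ℕ) : ℝ) * φ = (q.num : ℝ) * (2 * π) := by
      rw [hφπ, Rat.cast_def]
      push_cast
      field_simp
    have hz1 : z ^ (2 * q.den) = 1 := by
      rw [hz, ← Complex.exp_nat_mul]
      rw [show ((2 * q.den : ℕ) : ℂ) * ((φ : ℂ) * Complex.I)
            = ((((2 * q.den : ℕ) : ℝ) * φ : ℝ) : ℂ) * Complex.I by push_cast; ring, key]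
      rw [show (((q.num : ℝ) * (2 * π) : ℝ) : ℂ) * Complex.I
            = (q.num : ℂ) * (2 * (π : ℂ) * Complex.I) by push_cast; ring]
      exact Complex.exp_int_mul_two_pi_mul_I q.num
    have hwz : w = z⁻¹ := by rw [hw, hz, Complex.exp_neg]
    have hw1 : w ^ (2 * q.den) = 1 := by rw [hwz, inv_pow, hz1, inv_one]
    have hden : 2 * q.den ≠ 0 := by positivity
    have hzint : IsIntegral ℤ z := isIntegral_of_pow_eq_one hden hz1
    have hwint : IsIntegral ℤ w := isIntegral_of_pow_eq_one hden hw1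
    -- 2 sin φ = (w - z) * I
    have hsin : ((2 * r : ℚ) : ℂ) = (w - z) * Complex.I := by
      have h1 : Complex.sin (φ : ℂ) = ((r : ℝ) : ℂ) := by
        rw [← Complex.ofReal_sin, hr]
      rw [Complex.sin] at h1
      rw [show -(φ : ℂ) * Complex.I = -((φ : ℂ) * Complex.I) by ring] at h1
      push_cast at h1 ⊢
      rw [← h1, hz, hw]
      ring
    have hint : IsIntegral ℤ ((2 * r : ℚ) : ℂ) := by
      rw [hsin]
      exact ((hwint.sub hzint).mul isIntegral_I)
    have hint' : IsIntegral ℤ (2 * r : ℚ) := by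
      rwa [show ((2 * r : ℚ) : ℂ) = algebraMap ℚ ℂ (2 * r) from rfl,
        isIntegral_algebraMap_iff (algebraMap ℚ ℂ).injective] at hint
    obtain ⟨n, hn⟩ := IsIntegrallyClosed.isIntegral_iff.mp hint'
    have hn' : (n : ℚ) = 2 * r := by rwa [eq_intCast (algebraMap ℤ ℚ) n] at hn
    -- bounds
    have hs0 : 0 ≤ Real.sin φ := Real.sin_nonneg_of_nonneg_of_le_pi hφ0
      (by linarith [Real.pi_pos])
    have hs1 : Real.sin φ ≤ 1 := Real.sin_le_one φ
    have hrn : Real.sin φ = (n : ℝ) / 2 := by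
      rw [hr]
      have : ((n : ℚ) : ℝ) = ((2 * r : ℚ) : ℝ) := by exact_mod_cast hn'
      push_cast at this
      linarith
    have hn0 : 0 ≤ n := by
      by_contra h
      push_neg at h
      have : (n : ℝ) ≤ -1 := by exact_mod_cast Int.le_sub_one_of_lt h
      rw [hrn] at hs0; linarith
    have hn2 : n ≤ 2 := by
      by_contra h
      push_neg at h
      have : (3 : ℝ) ≤ (n : ℝ) := by exact_mod_cast h
      rw [hrn] at hs1; linarith
    have hmem : φ ∈ Set.Icc (-(π/2)) (π/2) := ⟨by linarith [Real.pi_pos], hφ2⟩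
    interval_cases n
    · left
      apply Real.injOn_sin hmem ⟨by linarith [Real.pi_pos], by linarith [Real.pi_pos]⟩
      rw [hrn]; simp
    · right; left
      have hp6 : π / 6 ∈ Set.Icc (-(π/2)) (π/2) := by
        constructor <;> [linarith [Real.pi_pos]; linarith [Real.pi_pos]]
      apply Real.injOn_sin hmem hp6
      rw [hrn, Real.sin_pi_div_six]; norm_num
    · right; right
      apply Real.injOn_sin hmem ⟨by linarith [Real.pi_pos], le_refl _⟩
      rw [hrn, Real.sin_pi_div_two]; norm_num
  · rintro (rfl | rfl | rfl)
    · exact ⟨⟨0, by simp⟩, ⟨0, by simp⟩⟩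
    · refine ⟨⟨1/2, by rw [Real.sin_pi_div_six]; norm_num⟩, ⟨1/6, ?_⟩⟩
      have := Real.pi_ne_zero; push_cast; field_simp
    · refine ⟨⟨1, by rw [Real.sin_pi_div_two]; norm_num⟩, ⟨1/2, ?_⟩⟩
      have := Real.pi_ne_zero; push_cast; field_simp
end Niven
end

section
/- Let b > 0 be an integer and κ ≥ 1 an integer. Then for v in a domain where v^b − 1 avoids the nonpositive real axis, an antiderivative of v^{κb−1}/√(v^b − 1) is (1/b)·√(v^b − 1)·∑_{j=0}^{κ−1} (2/(2j+1))·C(κ−1, j)·(v^b − 1)^j, where C(κ−1,j) is the binomial coefficient. -/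
private lemma key_sum (κ : ℕ) (hκ : 1 ≤ κ) (u : ℂ) :
    (1/2 : ℂ) * (∑ j ∈ Finset.range κ, (2 / (2 * j + 1) : ℂ) * (Nat.choose (κ - 1) j : ℂ) * u ^ j)
      + ∑ j ∈ Finset.range κ, (2 / (2 * j + 1) : ℂ) * (Nat.choose (κ - 1) j : ℂ) * (j : ℂ) * u ^ j
    = (u + 1) ^ (κ - 1) := by
  rw [Finset.mul_sum, ← Finset.sum_add_distrib]
  have h1 : ∀ j ∈ Finset.range κ,
      (1/2 : ℂ) * ((2 / (2 * j + 1) : ℂ) * (Nat.choose (κ - 1) j : ℂ) * u ^ j)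
        + (2 / (2 * j + 1) : ℂ) * (Nat.choose (κ - 1) j : ℂ) * (j : ℂ) * u ^ j
      = (Nat.choose (κ - 1) j : ℂ) * u ^ j := by
    intro j _
    have hne : ((2 * j + 1 : ℕ) : ℂ) ≠ 0 := Nat.cast_ne_zero.2 (by omega)
    push_cast at hne
    field_simp
    ring
  rw [Finset.sum_congr rfl h1]
  obtain ⟨n, rfl⟩ : ∃ n, κ = n + 1 := ⟨κ - 1, by omega⟩
  simp only [Nat.add_sub_cancel, add_pow, one_pow, mul_one]
  exact Finset.sum_congr rfl fun j _ => mul_comm _ _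

theorem antideriv_pos_case (b κ : ℕ) (hb : 0 < b) (hκ : 1 ≤ κ)
    (v : ℂ) (hv : v ^ b - 1 ∈ Complex.slitPlane) :
    HasDerivAt
      (fun w : ℂ => (1 / b : ℂ) * (w ^ b - 1) ^ ((1 : ℂ) / 2) *
        ∑ j ∈ Finset.range κ, (2 / (2 * j + 1) : ℂ) * (Nat.choose (κ - 1) j : ℂ) *
          (w ^ b - 1) ^ j)
      (v ^ (κ * b - 1) / (v ^ b - 1) ^ ((1 : ℂ) / 2)) v := by
  have hu0 : v ^ b - 1 ≠ 0 := Complex.slitPlane_ne_zero hv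
  set u : ℂ := v ^ b - 1 with hu
  set s : ℂ := u ^ ((1 : ℂ) / 2) with hs
  have hss : s * s = u := by
    rw [hs, ← Complex.cpow_add _ _ hu0]
    norm_num
  have hs0 : s ≠ 0 := fun h => hu0 (by rw [← hss, h, mul_zero])
  set m : ℂ := (b : ℂ) * v ^ (b - 1) with hm
  have hg : HasDerivAt (fun w : ℂ => w ^ b - 1) m v := by
    simpa using (hasDerivAt_pow b v).sub_const 1
  have hA : HasDerivAt (fun w : ℂ => (w ^ b - 1) ^ ((1 : ℂ) / 2))
      ((1 : ℂ) / 2 * u ^ ((1 : ℂ) / 2 - 1) * m) v := hg.cpow_const hv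
  have hT : HasDerivAt
      (fun w : ℂ => ∑ j ∈ Finset.range κ, (2 / (2 * j + 1) : ℂ) * (Nat.choose (κ - 1) j : ℂ) *
        (w ^ b - 1) ^ j)
      (∑ j ∈ Finset.range κ, (2 / (2 * j + 1) : ℂ) * (Nat.choose (κ - 1) j : ℂ) *
        ((j : ℂ) * u ^ (j - 1) * m)) v :=
    HasDerivAt.fun_sum fun j _ => (hg.pow j).const_mul _
  have hF := (hA.const_mul ((1 : ℂ) / b)).mul hT
  convert hF using 1
  · rfl
  · rfl
  · rfl
  symm
  rw [eq_div_iff hs0]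
  set Sval : ℂ := ∑ j ∈ Finset.range κ, (2 / (2 * j + 1) : ℂ) * (Nat.choose (κ - 1) j : ℂ) * u ^ j
    with hSval
  set Tval : ℂ := ∑ j ∈ Finset.range κ, (2 / (2 * j + 1) : ℂ) * (Nat.choose (κ - 1) j : ℂ) *
    ((j : ℂ) * u ^ (j - 1) * m) with hTval
  set K : ℂ := ∑ j ∈ Finset.range κ, (2 / (2 * j + 1) : ℂ) * (Nat.choose (κ - 1) j : ℂ) *
    (j : ℂ) * u ^ j with hK
  have hTu : u * Tval = K * m := by
    rw [hTval, hK, Finset.mul_sum, Finset.sum_mul]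
    refine Finset.sum_congr rfl fun j _ => ?_
    cases j with
    | zero => simp
    | succ n => simp only [Nat.add_sub_cancel, pow_succ]; push_cast; ring
  have hcpow : u ^ ((1 : ℂ) / 2 - 1) = s / u := by
    rw [Complex.cpow_sub _ _ hu0, Complex.cpow_one, hs]
  have hb0 : (b : ℂ) ≠ 0 := Nat.cast_ne_zero.2 hb.ne'
  have hkey := key_sum κ hκ u
  rw [← hSval, ← hK] at hkey
  have hvb : u + 1 = v ^ b := by rw [hu]; ring
  have hexp : b - 1 + b * (κ - 1) = κ * b - 1 := by
    obtain ⟨k, rfl⟩ : ∃ k, κ = k + 1 := ⟨κ - 1, by omega⟩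
    rw [Nat.succ_mul, Nat.add_sub_cancel, mul_comm b k]
    generalize k * b = p
    omega
  have hpow : v ^ (κ * b - 1) = v ^ (b - 1) * (v ^ b) ^ (κ - 1) := by
    rw [← pow_mul, ← pow_add, hexp]
  show (1 / (b:ℂ) * (1 / 2 * u ^ ((1:ℂ)/2 - 1) * m) * Sval + 1 / (b:ℂ) * s * Tval) * s
      = v ^ (κ * b - 1)
  rw [hcpow]
  calc (1 / (b:ℂ) * (1 / 2 * (s / u) * m) * Sval + 1 / (b:ℂ) * s * Tval) * s
      = 1 / (2 * b) * m * Sval * ((s * s) / u) + 1 / (b:ℂ) * Tval * (s * s) := by ring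
    _ = 1 / (2 * b) * m * Sval * (u / u) + 1 / (b:ℂ) * Tval * u := by rw [hss]
    _ = 1 / (2 * b) * m * Sval + 1 / (b:ℂ) * (u * Tval) := by rw [div_self hu0]; ring
    _ = 1 / (2 * b) * m * Sval + 1 / (b:ℂ) * (K * m) := by rw [hTu]
    _ = 1 / (b:ℂ) * m * (1 / 2 * Sval + K) := by ring
    _ = 1 / (b:ℂ) * ((b:ℂ) * v ^ (b - 1)) * ((u + 1) ^ (κ - 1)) := by rw [hkey, hm]
    _ = v ^ (b - 1) * (v ^ b) ^ (κ - 1) := by rw [hvb]; field_simp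
    _ = v ^ (κ * b - 1) := hpow.symm
end
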